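/- arXiv:2408.05561 — 3 statements merged into one kernel-verified Lean document; each statement's English description precedes it below -/
import Mathlib

section
/- Let K be a field, R = K[x_1,…,x_n], and let I ⊆ R be a normally torsion-free square-free monomial ideal with minimal monomial generating set G(I) = {u_1,…,u_m}. Let S = R[x_{n+1},…,x_{n+m}] = K[x_1,…,x_{n+m}], let f be a square-free monomial dividing u_m, and set L = (u_1,…,u_{m−1})S + f x_{n+1}⋯x_{n+m} S. Assume f x_{n+1}⋯x_{n+m} ∉ 𝔭^2 for every minimal prime 𝔭 of L, and that the ideal (u_1,…,u_{m−1})S is normally torsion-free. Then L has the strong persistence property, that is, (L^{k+1} :_S L) = L^k for all integers k ≥ 1. -/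
/-!
Write `L = J + (v)` with `J` the edge ideal of the square-free monomials `u_1, …, u_{m-1}` and
`v = x^w` a monomial. Since `L^{k+1} ⊆ J^{k+1} + v L^k`, an element `x` with `x v ∈ L^{k+1}`
differs from an element of `L^k` by some `y` with `y v ∈ J^{k+1}`, so it suffices to show
`(J^{k+1} : v) ⊆ J^k`, and by monomiality only for monomials `x^d`.

The minimal primes of `J` are the ideals `𝔭_C = (x_c : c ∈ C)` of minimal vertex covers `C`,
and as `J` is an intersection of such primes, `Ass(S/J) = Min(J)`. Normal torsion-freeness
puts every associated prime of `S/J^k` among them, so `x^d ∈ J^k` as soon as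
`∑_{c ∈ C} d_c ≥ k` for every such `C`: otherwise some `𝔭_C` contains `(J^k : x^d)`, and
choosing for each `c ∈ C` an edge `E_c` meeting `C` only in `c`, the monomial
`∏_c (x^{E_c} / x_c)^{d_c} ∉ 𝔭_C` multiplies `x^d` into `J^{∑ d_c} ⊆ J^k`.
Finally `x^d v ∈ J^{k+1} ⊆ 𝔭_C^{k+1}` gives `∑_C d_c + ∑_C w_c ≥ k + 1`, and `∑_C w_c ≤ 1`,
since otherwise `𝔭_C` would be a minimal prime of `L` with `v ∈ 𝔭_C^2`.
-/

open MvPolynomial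

/-- An ideal is normally torsion-free if `Ass(R/I^k) ⊆ Ass(R/I)` for all `k ≥ 1`. -/
def IsNTF {R : Type*} [CommRing R] (I : Ideal R) : Prop :=
  ∀ k : ℕ, 1 ≤ k →
    associatedPrimes R (R ⧸ I ^ k) ⊆ associatedPrimes R (R ⧸ I)

namespace Ideal

theorem sup_pow_succ_le {A : Type*} [CommSemiring A] (I J : Ideal A) (n : ℕ) :
    (I ⊔ J) ^ (n + 1) ≤ I ^ (n + 1) ⊔ J * (I ⊔ J) ^ n := by
  induction n with
  | zero => simp
  | succ n ih =>
    calc (I ⊔ J) ^ (n + 2) = I * (I ⊔ J) ^ (n + 1) ⊔ J * (I ⊔ J) ^ (n + 1) := by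
          rw [pow_succ' _ (n + 1), sup_mul]
      _ ≤ I * (I ^ (n + 1) ⊔ J * (I ⊔ J) ^ n) ⊔ J * (I ⊔ J) ^ (n + 1) := by gcongr
      _ ≤ I ^ (n + 2) ⊔ J * (I ⊔ J) ^ (n + 1) := by
          rw [mul_sup, ← pow_succ', sup_assoc, mul_left_comm]
          refine sup_le_sup_left (sup_le (mul_mono_right ?_) le_rfl) _
          rw [pow_succ' _ n]
          exact mul_mono_left le_sup_left

variable {A ι : Type*} [CommRing A]

theorem mem_colon_bot_mk_iff {I : Ideal A} {r z : A} :
    r ∈ (⊥ : Submodule A (A ⧸ I)).colon {Quotient.mk I z} ↔ r * z ∈ I := by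
  rw [Submodule.mem_colon_singleton, Submodule.mem_bot, Algebra.smul_def,
    Quotient.algebraMap_eq, ← map_mul, Quotient.eq_zero_iff_mem]

theorem associatedPrimes_subset_minimalPrimes_of_eq_inf [IsNoetherianRing A] {J : Ideal A}
    {s : Finset ι} {p : ι → Ideal A} (hp : ∀ i ∈ s, (p i).IsPrime) (hJ : J = s.inf p) :
    associatedPrimes A (A ⧸ J) ⊆ J.minimalPrimes := by
  intro P hP
  obtain ⟨hPp, z, hPz⟩ := isAssociatedPrime_iff.mp hP
  obtain ⟨z, rfl⟩ := Quotient.mk_surjective z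
  have hmem : ∀ r, r ∈ P ↔ ∀ i ∈ s, z ∉ p i → r ∈ p i := fun r => by
    rw [hPz, mem_colon_bot_mk_iff, hJ, Submodule.mem_finsetInf]
    exact forall₂_congr fun i hi => by rw [(hp i hi).mul_mem_iff_mem_or_mem]; tauto
  have hzP : z ∉ P := fun hz => hPp.ne_top <| (Submodule.eq_top_iff'.mpr fun r =>
    (hmem r).mpr fun i hi hzi => absurd ((hmem z).mp hz i hi hzi) hzi)
  refine ⟨⟨hPp, fun r hr => (hmem r).mpr fun i hi _ => ?_⟩, fun Q ⟨hQ, hJQ⟩ hQP => ?_⟩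
  · exact (Finset.inf_le hi : s.inf p ≤ p i) (hJ ▸ hr)
  · obtain ⟨j, hj, hpj⟩ := hQ.inf_le'.mp (hJ ▸ hJQ)
    exact fun r hr => hpj ((hmem r).mp hr j hj fun hzj => hzP (hQP (hpj hzj)))

theorem exists_eq_of_mem_minimalPrimes_inf {s : Finset ι} {p : ι → Ideal A}
    (hp : ∀ i ∈ s, (p i).IsPrime) {P : Ideal A} (hP : P ∈ (s.inf p).minimalPrimes) :
    ∃ i ∈ s, P = p i := by
  obtain ⟨i, hi, hpi⟩ := hP.1.1.inf_le'.mp hP.1.2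
  exact ⟨i, hi, le_antisymm (hP.2 ⟨hp i hi, Finset.inf_le hi⟩ hpi) hpi⟩

end Ideal

namespace MvPolynomial

section CommSemiring

variable {σ R : Type*} [CommSemiring R]

theorem mem_of_forall_monomial_mem {I : Ideal (MvPolynomial σ R)} {f : MvPolynomial σ R}
    (h : ∀ d ∈ f.support, monomial d 1 ∈ I) : f ∈ I := by
  rw [f.as_sum]
  refine Ideal.sum_mem _ fun d hd => ?_
  rw [← mul_one (coeff d f), ← C_mul_monomial]
  exact I.mul_mem_left _ (h d hd)

theorem prod_X_pow_dvd_monomial [Fintype σ] (C : Finset σ) (d : σ →₀ ℕ) :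
    ∏ c ∈ C, X c ^ d c ∣ monomial d (1 : R) := by
  rw [monomial_eq, C_1, one_mul, Finsupp.prod_fintype _ _ fun _ => pow_zero _]
  exact Finset.prod_dvd_prod_of_subset _ _ _ (Finset.subset_univ C)

variable (R) in
noncomputable def varIdeal (C : Finset σ) : Ideal (MvPolynomial σ R) :=
  Ideal.span (X '' C)

theorem X_mem_varIdeal {C : Finset σ} {i : σ} (hi : i ∈ C) : X i ∈ varIdeal R C :=
  Ideal.subset_span (Set.mem_image_of_mem X hi)

theorem X_mem_varIdeal_iff [Nontrivial R] {C : Finset σ} {i : σ} :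
    X i ∈ varIdeal R C ↔ i ∈ C := by
  classical
  simp [varIdeal, mem_ideal_span_X_image, support_X, Finsupp.single_apply]

theorem monomial_mem_varIdeal_pow [Fintype σ] {C : Finset σ} {d : σ →₀ ℕ} {j : ℕ}
    (h : j ≤ ∑ c ∈ C, d c) : monomial d (1 : R) ∈ varIdeal R C ^ j := by
  refine Ideal.pow_le_pow_right h (Ideal.mem_of_dvd _ (prod_X_pow_dvd_monomial C d) ?_)
  rw [← Finset.prod_pow_eq_pow_sum]
  exact Ideal.prod_mem_prod fun c hc => Ideal.pow_mem_pow (X_mem_varIdeal hc) _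

theorem le_sum_of_mem_varIdeal_pow {C : Finset σ} {j : ℕ} {f : MvPolynomial σ R}
    (hf : f ∈ varIdeal R C ^ j) : ∀ d ∈ f.support, j ≤ ∑ c ∈ C, d c := by
  classical
  induction j generalizing f with
  | zero => simp
  | succ j ih =>
    rw [pow_succ'] at hf
    refine Submodule.mul_induction_on hf (fun a ha b hb d hd => ?_) (fun a b ha hb d hd => ?_)
    · obtain ⟨da, hda, db, hdb, rfl⟩ := Finset.mem_add.mp (support_mul a b hd)
      obtain ⟨c, hc, hdac⟩ := mem_ideal_span_X_image.mp ha da hda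
      have hda1 : 1 ≤ ∑ c ∈ C, da c :=
        (Nat.one_le_iff_ne_zero.mpr hdac).trans (Finset.single_le_sum (by simp) hc)
      have hdbj := ih hb db hdb
      simp only [Finsupp.add_apply, Finset.sum_add_distrib]
      omega
    · rcases Finset.mem_union.mp (support_add hd) with hd | hd
      exacts [ha d hd, hb d hd]

variable (R) in
noncomputable def edgeIdeal (ES : Set (Finset σ)) : Ideal (MvPolynomial σ R) :=
  Ideal.span ((fun E => ∏ i ∈ E, X i) '' ES)

theorem prod_X_mem_edgeIdeal {ES : Set (Finset σ)} {E : Finset σ} (hE : E ∈ ES) :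
    ∏ i ∈ E, X i ∈ edgeIdeal R ES :=
  Ideal.subset_span (Set.mem_image_of_mem _ hE)

end CommSemiring

variable {σ R : Type*} [CommRing R] [IsDomain R]

theorem varIdeal_isPrime (C : Finset σ) : (varIdeal R C).IsPrime := by
  classical
  let g : σ → MvPolynomial σ R := fun i => if i ∈ C then 0 else X i
  -- `aeval g` kills exactly `varIdeal R C`, because it is the identity modulo that ideal.
  have hmk : (Ideal.Quotient.mkₐ R (varIdeal R C)).comp (aeval g) =
      Ideal.Quotient.mkₐ R (varIdeal R C) := by
    refine algHom_ext fun i => ?_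
    by_cases hi : i ∈ C
    · simp only [AlgHom.comp_apply, aeval_X, g, if_pos hi, map_zero, Ideal.Quotient.mkₐ_eq_mk]
      exact (Ideal.Quotient.eq_zero_iff_mem.mpr (X_mem_varIdeal hi)).symm
    · simp [g, hi]
  have hker : varIdeal R C = RingHom.ker (aeval g) := by
    refine le_antisymm (Ideal.span_le.mpr ?_) fun f hf => ?_
    · rintro _ ⟨i, hi, rfl⟩
      simp [g, Finset.mem_coe.mp hi]
    · rw [← Ideal.Quotient.eq_zero_iff_mem, ← Ideal.Quotient.mkₐ_eq_mk R,
        ← hmk, AlgHom.comp_apply, (RingHom.mem_ker).mp hf, map_zero]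
  rw [hker]
  exact RingHom.ker_isPrime _

theorem prod_X_mem_varIdeal_iff {C E : Finset σ} :
    ∏ i ∈ E, X i ∈ varIdeal R C ↔ ∃ i ∈ E, i ∈ C := by
  have := varIdeal_isPrime (R := R) C
  simp only [Ideal.IsPrime.prod_mem_iff, X_mem_varIdeal_iff]

theorem edgeIdeal_le_varIdeal_iff {ES : Set (Finset σ)} {C : Finset σ} :
    edgeIdeal R ES ≤ varIdeal R C ↔ ∀ E ∈ ES, ∃ i ∈ E, i ∈ C := by
  simp [edgeIdeal, Ideal.span_le, Set.subset_def, prod_X_mem_varIdeal_iff]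

open Classical in
theorem edgeIdeal_eq_inf [Fintype σ] (ES : Set (Finset σ)) :
    edgeIdeal R ES =
      (Finset.univ.filter fun C => edgeIdeal R ES ≤ varIdeal R C).inf (varIdeal R) := by
  refine le_antisymm (Finset.le_inf fun C hC => (Finset.mem_filter.mp hC).2)
    fun f hf => mem_of_forall_monomial_mem fun d hd => ?_
  -- The variables absent from `x^d` cannot form a vertex cover, so some edge divides `x^d`.
  have hnot : ¬ edgeIdeal R ES ≤ varIdeal R (Finset.univ \ d.support) := fun hle => by
    have := (Finset.inf_le (Finset.mem_filter.mpr ⟨Finset.mem_univ _, hle⟩) :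
      _ ≤ varIdeal R (Finset.univ \ d.support)) hf
    obtain ⟨c, hc, hdc⟩ := mem_ideal_span_X_image.mp this d hd
    simp_all
  simp only [edgeIdeal_le_varIdeal_iff, not_forall, not_exists] at hnot
  obtain ⟨E, hE, hEd⟩ := hnot
  refine Ideal.mem_of_dvd _ ((Finset.prod_dvd_prod_of_dvd _ _ fun i hi =>
    dvd_pow_self (X i) ?_).trans (prod_X_pow_dvd_monomial E d)) (prod_X_mem_edgeIdeal hE)
  simpa using fun h => hEd i ⟨hi, h⟩

theorem exists_private_edge {ES : Set (Finset σ)} {C : Finset σ}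
    (hC : varIdeal R C ∈ (edgeIdeal R ES).minimalPrimes) {c : σ} (hc : c ∈ C) :
    ∃ E ∈ ES, c ∈ E ∧ ∀ i ∈ E, i ∈ C → i = c := by
  classical
  have hnot : ¬ edgeIdeal R ES ≤ varIdeal R (C.erase c) := fun hle => by
    have := hC.2 ⟨varIdeal_isPrime _, hle⟩
      (Ideal.span_mono (Set.image_mono (by simp))) (X_mem_varIdeal hc)
    simp [X_mem_varIdeal_iff] at this
  simp only [edgeIdeal_le_varIdeal_iff, not_forall, not_exists] at hnot
  obtain ⟨E, hE, hEC⟩ := hnot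
  have hEc : ∀ i ∈ E, i ∈ C → i = c := fun i hi hiC =>
    by_contra fun h => hEC i ⟨hi, Finset.mem_erase.mpr ⟨h, hiC⟩⟩
  obtain ⟨i, hiE, hiC⟩ := edgeIdeal_le_varIdeal_iff.mp hC.1.2 E hE
  exact ⟨E, hE, hEc i hiE hiC ▸ hiE, hEc⟩

variable [Fintype σ] [IsNoetherianRing R]

theorem monomial_mem_edgeIdeal_pow {ES : Set (Finset σ)} {k : ℕ}
    (hNTF : associatedPrimes (MvPolynomial σ R) (MvPolynomial σ R ⧸ edgeIdeal R ES ^ k) ⊆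
      associatedPrimes (MvPolynomial σ R) (MvPolynomial σ R ⧸ edgeIdeal R ES))
    {d : σ →₀ ℕ} (hd : ∀ C, varIdeal R C ∈ (edgeIdeal R ES).minimalPrimes → k ≤ ∑ c ∈ C, d c) :
    monomial d 1 ∈ edgeIdeal R ES ^ k := by
  classical
  have hJ := edgeIdeal_eq_inf (R := R) ES
  set J := edgeIdeal R ES
  by_contra hdk
  obtain ⟨P, hP, hannP⟩ := exists_le_isAssociatedPrime_of_isNoetherianRing (MvPolynomial σ R)
    (Ideal.Quotient.mk (J ^ k) (monomial d 1)) (by rwa [Ne, Ideal.Quotient.eq_zero_iff_mem])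
  have hPmin : P ∈ J.minimalPrimes := Ideal.associatedPrimes_subset_minimalPrimes_of_eq_inf
    (fun C _ => varIdeal_isPrime C) hJ (hNTF hP)
  obtain ⟨C, -, rfl⟩ := Ideal.exists_eq_of_mem_minimalPrimes_inf
    (fun C _ => varIdeal_isPrime C) (hJ ▸ hPmin)
  choose! E hE using fun c (hc : c ∈ C) => exists_private_edge hPmin hc
  set y : MvPolynomial σ R := ∏ c ∈ C, (∏ i ∈ (E c).erase c, X i) ^ d c
  have hyC : y ∉ varIdeal R C := fun hy => by
    have := varIdeal_isPrime (R := R) C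
    obtain ⟨c, hc, hcy⟩ := Ideal.IsPrime.prod_mem_iff.mp hy
    obtain ⟨i, hi, hiC⟩ := prod_X_mem_varIdeal_iff.mp (this.mem_of_pow_mem _ hcy)
    exact (Finset.mem_erase.mp hi).1 ((hE c hc).2.2 i (Finset.mem_erase.mp hi).2 hiC)
  have hgen : ∏ c ∈ C, (∏ i ∈ E c, X i) ^ d c ∈ J ^ k := by
    refine Ideal.pow_le_pow_right (hd C hPmin) ?_
    rw [← Finset.prod_pow_eq_pow_sum]
    exact Ideal.prod_mem_prod fun c hc => Ideal.pow_mem_pow (prod_X_mem_edgeIdeal (hE c hc).1) _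
  have hfac : ∏ c ∈ C, (∏ i ∈ E c, X i) ^ d c = y * ∏ c ∈ C, X c ^ d c := by
    rw [← Finset.prod_mul_distrib]
    refine Finset.prod_congr rfl fun c hc => ?_
    rw [← Finset.mul_prod_erase _ _ (hE c hc).2.1, mul_pow, mul_comm]
  have hyd : y * monomial d 1 ∈ J ^ k :=
    Ideal.mem_of_dvd _ (hfac ▸ mul_dvd_mul_left y (prod_X_pow_dvd_monomial C d)) hgen
  exact hyC (hannP (Ideal.mem_colon_bot_mk_iff.mpr hyd))

theorem mem_edgeIdeal_pow_of_mul_monomial_mem {ES : Set (Finset σ)} {w : σ →₀ ℕ} {k : ℕ}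
    (hNTF : associatedPrimes (MvPolynomial σ R) (MvPolynomial σ R ⧸ edgeIdeal R ES ^ k) ⊆
      associatedPrimes (MvPolynomial σ R) (MvPolynomial σ R ⧸ edgeIdeal R ES))
    (hw : ∀ p ∈ (edgeIdeal R ES ⊔ Ideal.span {monomial w 1}).minimalPrimes,
      monomial w (1 : R) ∉ p ^ 2)
    {y : MvPolynomial σ R} (hy : y * monomial w 1 ∈ edgeIdeal R ES ^ (k + 1)) :
    y ∈ edgeIdeal R ES ^ k := by
  refine mem_of_forall_monomial_mem fun d hd => monomial_mem_edgeIdeal_pow hNTF fun C hC => ?_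
  have hdw : k + 1 ≤ ∑ c ∈ C, d c + ∑ c ∈ C, w c := by
    rw [← Finset.sum_add_distrib]
    refine le_sum_of_mem_varIdeal_pow (Ideal.pow_right_mono hC.1.2 _ hy) (d + w) ?_
    simpa [mem_support_iff, coeff_mul_monomial] using hd
  have hw1 : ∑ c ∈ C, w c ≤ 1 := by
    by_contra! h2
    have hwC : monomial w 1 ∈ varIdeal R C := by
      simpa using monomial_mem_varIdeal_pow (R := R) (j := 1) (by omega)
    have hCL : varIdeal R C ∈ (edgeIdeal R ES ⊔ Ideal.span {monomial w 1}).minimalPrimes :=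
      ⟨⟨varIdeal_isPrime C, sup_le hC.1.2 (Ideal.span_singleton_le_iff_mem _ |>.mpr hwC)⟩,
        fun Q hQ hQC => hC.2 ⟨hQ.1, le_sup_left.trans hQ.2⟩ hQC⟩
    exact hw _ hCL (monomial_mem_varIdeal_pow h2)
  omega

theorem colon_pow_succ_eq_pow {ES : Set (Finset σ)} {w : σ →₀ ℕ}
    {L : Ideal (MvPolynomial σ R)} (hL : L = edgeIdeal R ES ⊔ Ideal.span {monomial w 1})
    (hNTF : IsNTF (edgeIdeal R ES)) (hw : ∀ p ∈ L.minimalPrimes, monomial w (1 : R) ∉ p ^ 2)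
    {k : ℕ} (hk : 1 ≤ k) :
    (L ^ (k + 1)).colon L = L ^ k := by
  subst hL
  set J := edgeIdeal R ES
  set v : MvPolynomial σ R := monomial w 1
  refine le_antisymm (fun x hx => ?_) fun x hx => Submodule.mem_colon.mpr fun p hp => ?_
  · have hxv := Submodule.mem_colon.mp hx v (Ideal.mem_sup_right (Ideal.mem_span_singleton_self v))
    obtain ⟨a, ha, b, hb, hab⟩ := Submodule.mem_sup.mp (Ideal.sup_pow_succ_le J _ k hxv)
    obtain ⟨z, hz, rfl⟩ := Ideal.mem_span_singleton_mul.mp hb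
    have hxz : (x - z) * v ∈ J ^ (k + 1) := by
      rwa [sub_mul, ← smul_eq_mul, ← hab, mul_comm z, add_sub_cancel_right]
    rw [← sub_add_cancel x z]
    exact add_mem (Ideal.pow_right_mono le_sup_left k
      (mem_edgeIdeal_pow_of_mul_monomial_mem (hNTF k hk) hw hxz)) hz
  · rw [smul_eq_mul, pow_succ]
    exact Ideal.mul_mem_mul hx hp

end MvPolynomial

/- Generators are indexed from `0`: `u_j = ∏_{i ∈ U j} x_i` for `j ≤ m`, the paper's `u_m` is
`U (Fin.last m)`, `f = ∏_{i ∈ F} x_i`, and `Fin.natAdd n j` indexes the new variables of `S`. -/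
theorem stmt_14_general {K : Type*} [Field K] {n m : ℕ}
    (U : Fin (m + 1) → Finset (Fin n))
    (F : Finset (Fin n))
    (J : Ideal (MvPolynomial (Fin (n + (m + 1))) K))
    (hJ : J = Ideal.span {f : MvPolynomial (Fin (n + (m + 1))) K |
      ∃ j : Fin (m + 1), j ≠ Fin.last m ∧ f = ∏ i ∈ U j, X (Fin.castAdd (m + 1) i)})
    (v : MvPolynomial (Fin (n + (m + 1))) K)
    (hv : v = (∏ i ∈ F, X (Fin.castAdd (m + 1) i)) * ∏ j : Fin (m + 1), X (Fin.natAdd n j))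
    (L : Ideal (MvPolynomial (Fin (n + (m + 1))) K))
    (hL : L = J + Ideal.span {v})
    (hvp : ∀ p ∈ L.minimalPrimes, v ∉ p ^ 2)
    (hJNTF : IsNTF J) :
    ∀ k : ℕ, 1 ≤ k → (L ^ (k + 1)).colon L = L ^ k := by
  obtain ⟨ES, rfl⟩ : ∃ ES, J = edgeIdeal K ES :=
    ⟨(fun j => (U j).map (Fin.castAddEmb (m + 1))) '' {j | j ≠ Fin.last m}, by
      rw [hJ, edgeIdeal, Set.image_image]
      congr 1
      ext f
      simp [eq_comm]⟩
  obtain ⟨w, rfl⟩ : ∃ w, v = monomial w 1 :=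
    ⟨∑ i ∈ F, Finsupp.single (Fin.castAdd (m + 1) i) 1 + ∑ j, Finsupp.single (Fin.natAdd n j) 1,
      by
        rw [hv, ← mul_one (1 : K), ← monomial_mul, monomial_sum_one, monomial_sum_one]
        rfl⟩
  exact fun k hk => colon_pow_succ_eq_pow (hL.trans (Submodule.add_eq_sup _ _)) hJNTF hvp hk

theorem stmt_14 {K : Type*} [Field K] {n m : ℕ}
    (U : Fin (m + 1) → Finset (Fin n))
    (hU : ∀ j k : Fin (m + 1), j ≠ k → ¬ U j ⊆ U k)
    (hNTF : IsNTF (Ideal.span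
      (Set.range fun j : Fin (m + 1) => ∏ i ∈ U j, (X i : MvPolynomial (Fin n) K))))
    (F : Finset (Fin n)) (hF : F ⊆ U (Fin.last m))
    (J : Ideal (MvPolynomial (Fin (n + (m + 1))) K))
    (hJ : J = Ideal.span {f : MvPolynomial (Fin (n + (m + 1))) K |
      ∃ j : Fin (m + 1), j ≠ Fin.last m ∧ f = ∏ i ∈ U j, X (Fin.castAdd (m + 1) i)})
    (v : MvPolynomial (Fin (n + (m + 1))) K)
    (hv : v = (∏ i ∈ F, X (Fin.castAdd (m + 1) i)) * ∏ j : Fin (m + 1), X (Fin.natAdd n j))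
    (L : Ideal (MvPolynomial (Fin (n + (m + 1))) K))
    (hL : L = J + Ideal.span {v})
    (hvp : ∀ p ∈ L.minimalPrimes, v ∉ p ^ 2)
    (hJNTF : IsNTF J) :
    ∀ k : ℕ, 1 ≤ k → (L ^ (k + 1)).colon L = L ^ k :=
  stmt_14_general U F J hJ v hv L hL hvp hJNTF
end

section
/- Let K be a field and R = K[x,y,z]. Let J = (x^3, x^2z, xz^2, yz^3) ⊆ R. Then Ass(R/J^s) = {(x,y), (x,z)} for every integer s ≥ 1; in particular, J is normally torsion-free. -/
open MvPolynomial

/-!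
Write `𝔭 = (x, y)` and `𝔮 = (x, z)`. A monomial `x^a y^b z^c` lies in `J^s` exactly when
`a + b ≥ s` and `a + c ≥ 3s`, so `J^s = 𝔭^s ∩ 𝔮^(3s)`. A power of an ideal generated by variables
is primary: membership in `(X_i : i ∈ S)^n` says that the lowest `S`-degree is at least `n`, and
lowest degrees add under multiplication over a domain. So `J^s = 𝔭^s ∩ 𝔮^(3s)` is a primary
decomposition with incomparable components, and its associated primes are `𝔭` and `𝔮`.
-/

namespace MvPolynomial

variable {σ R : Type*} [CommRing R] {S : Set σ} {n : ℕ} {f g : MvPolynomial σ R}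

theorem monomial_mem_span_X_image_pow (d : σ →₀ ℕ) (r : R) :
    monomial d r ∈ Ideal.span (X '' S) ^ Finsupp.weight (S.indicator 1) d := by
  induction d using Finsupp.induction with
  | zero => simp
  | single_add i k d _ _ ih =>
    rw [monomial_single_add, map_add, pow_add]
    refine Ideal.mul_mem_mul ?_ ih
    by_cases hi : i ∈ S
    · simpa [Finsupp.weight_single, hi] using
        Ideal.pow_mem_pow (Ideal.subset_span (Set.mem_image_of_mem (X (R := R)) hi)) k
    · simp [Finsupp.weight_single, hi]

theorem one_le_weightedOrder_of_mem_span_X_image (hf : f ∈ Ideal.span (X '' S)) :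
    1 ≤ (f : MvPowerSeries σ R).weightedOrder (S.indicator 1) := by
  refine MvPowerSeries.le_weightedOrder _ fun d hd => ?_
  rw [coeff_coe, ← notMem_support_iff]
  intro hdf
  obtain ⟨i, hi, hdi⟩ := mem_ideal_span_X_image.mp hf d hdf
  have := Finsupp.le_weight_of_ne_zero' (S.indicator (1 : σ → ℕ)) hdi
  simp only [Set.indicator_of_mem hi, Pi.one_apply] at this
  exact hd.not_ge (mod_cast this)

theorem mem_span_X_image_pow_iff :
    f ∈ Ideal.span (X '' S) ^ n ↔
      n ≤ (f : MvPowerSeries σ R).weightedOrder (S.indicator 1) := by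
  constructor
  · intro hf
    induction hf using Submodule.pow_induction_on_left' with
    | algebraMap => simp
    | add x y i _ _ hx hy =>
      rw [coe_add]
      exact le_min hx hy |>.trans (MvPowerSeries.min_weightedOrder_le_add _)
    | mem_mul m hm i x _ hx =>
      rw [coe_mul, Nat.cast_succ, add_comm]
      exact (add_le_add (one_le_weightedOrder_of_mem_span_X_image hm) hx).trans
        (MvPowerSeries.le_weightedOrder_mul _)
  · intro hf
    rw [f.as_sum]
    refine Ideal.sum_mem _ fun d hd => Ideal.pow_le_pow_right ?_ (monomial_mem_span_X_image_pow d _)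
    have := (hf.trans (MvPowerSeries.weightedOrder_le _ (by rwa [coeff_coe, ← mem_support_iff])))
    exact_mod_cast this

theorem le_weight_of_mem_span_X_image_pow (hf : f ∈ Ideal.span (X '' S) ^ n) {d : σ →₀ ℕ}
    (hd : d ∈ f.support) : n ≤ Finsupp.weight (S.indicator 1) d := by
  have := (mem_span_X_image_pow_iff.mp hf).trans
    (MvPowerSeries.weightedOrder_le _ (by rwa [coeff_coe, ← mem_support_iff]))
  exact_mod_cast this

theorem X_mem_span_X_image_iff [Nontrivial R] {i : σ} :
    (X i : MvPolynomial σ R) ∈ Ideal.span (X '' S) ↔ i ∈ S := by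
  classical
  simp [mem_ideal_span_X_image, support_X, Finsupp.single_apply]

variable [IsDomain R]

theorem mem_or_mem_of_mul_mem_span_X_image_pow (h : f * g ∈ Ideal.span (X '' S) ^ n) :
    f ∈ Ideal.span (X '' S) ^ n ∨ g ∈ Ideal.span (X '' S) := by
  refine or_iff_not_imp_right.mpr fun hg => ?_
  rw [← pow_one (Ideal.span _), mem_span_X_image_pow_iff, not_le, Nat.cast_one,
    Order.lt_one_iff] at hg
  rw [mem_span_X_image_pow_iff, coe_mul, MvPowerSeries.weightedOrder_mul, hg, add_zero] at h
  exact mem_span_X_image_pow_iff.mpr h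

theorem isPrime_span_X_image : (Ideal.span (X '' S) : Ideal (MvPolynomial σ R)).IsPrime := by
  refine ⟨fun h => ?_, fun hfg => ?_⟩
  · have h1 := (Ideal.eq_top_iff_one _).mp h
    rw [← pow_one (Ideal.span _), mem_span_X_image_pow_iff, coe_one,
      MvPowerSeries.weightedOrder_one] at h1
    exact absurd h1 (by norm_num)
  · simpa using mem_or_mem_of_mul_mem_span_X_image_pow (n := 1) (by simpa using hfg)

theorem radical_span_X_image_pow (hn : n ≠ 0) :
    (Ideal.span (X '' S) ^ n : Ideal (MvPolynomial σ R)).radical = Ideal.span (X '' S) := by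
  rw [Ideal.radical_pow _ hn, isPrime_span_X_image.radical]

theorem isPrimary_span_X_image_pow (hn : n ≠ 0) :
    (Ideal.span (X '' S) ^ n : Ideal (MvPolynomial σ R)).IsPrimary := by
  refine Ideal.isPrimary_iff.mpr ⟨?_, fun h => ?_⟩
  · exact ne_top_of_le_ne_top isPrime_span_X_image.ne_top (Ideal.pow_le_self hn)
  · rw [radical_span_X_image_pow hn]
    exact mem_or_mem_of_mul_mem_span_X_image_pow h

theorem X_pow_notMem_span_X_image_pow {i : σ} (hi : i ∉ S) (k : ℕ) (hn : n ≠ 0) :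
    (X i ^ k : MvPolynomial σ R) ∉ Ideal.span (X '' S) ^ n := fun h =>
  hi (X_mem_span_X_image_iff.mp (isPrime_span_X_image.mem_of_pow_mem k (Ideal.pow_le_self hn h)))

end MvPolynomial

namespace Ideal

variable {R : Type*} [CommRing R] {A B : Ideal R}

theorem associatedPrimes_quotient_inf_subset :
    associatedPrimes R (R ⧸ A ⊓ B) ⊆ associatedPrimes R (R ⧸ A) ∪ associatedPrimes R (R ⧸ B) := by
  have hker : A ⊓ B = LinearMap.ker (A.mkQ.prod B.mkQ) := by
    rw [LinearMap.ker_prod, Submodule.ker_mkQ, Submodule.ker_mkQ]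
  rw [← associatedPrimes.prod]
  exact associatedPrimes.subset_of_injective (LinearMap.ker_eq_bot.mp
    (Submodule.ker_liftQ_eq_bot' _ _ hker))

theorem radical_mem_associatedPrimes_quotient_inf (hA : A.IsPrimary) (hBA : ¬B ≤ A) :
    A.radical ∈ associatedPrimes R (R ⧸ A ⊓ B) := by
  obtain ⟨b, hbB, hbA⟩ := SetLike.not_le_iff_exists.mp hBA
  have hcolon : (⊥ : Submodule R (R ⧸ A ⊓ B)).colon {Ideal.Quotient.mk _ b} = A.colon {b} := by
    ext r
    simp only [Submodule.mem_colon_singleton, Submodule.mem_bot, smul_eq_mul]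
    rw [Algebra.smul_def, Ideal.Quotient.algebraMap_eq, ← map_mul, Ideal.Quotient.eq_zero_iff_mem,
      mem_inf, and_iff_left (B.mul_mem_left r hbB)]
  refine ⟨isPrime_radical hA, Ideal.Quotient.mk _ b, ?_⟩
  rw [hcolon, hA.radical_colon_singleton_of_notMem hbA, Submodule.colon_univ]

theorem associatedPrimes_quotient_inf_of_isPrimary [IsNoetherianRing R] (hA : A.IsPrimary)
    (hB : B.IsPrimary) (hAB : ¬A ≤ B) (hBA : ¬B ≤ A) :
    associatedPrimes R (R ⧸ A ⊓ B) = {A.radical, B.radical} := by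
  refine subset_antisymm (fun P hP => ?_) (Set.insert_subset_iff.mpr
    ⟨radical_mem_associatedPrimes_quotient_inf hA hBA, Set.singleton_subset_iff.mpr
      (inf_comm A B ▸ radical_mem_associatedPrimes_quotient_inf hB hAB)⟩)
  rcases associatedPrimes_quotient_inf_subset hP with h | h
  · rw [associatedPrimes.eq_singleton_of_isPrimary hA] at h
    exact Or.inl h
  · rw [associatedPrimes.eq_singleton_of_isPrimary hB] at h
    exact Or.inr h

end Ideal

namespace NormallyTorsionFreeExample

variable {R : Type*} [CommRing R]

local notation "𝔭" => Ideal.span {(X 0 : MvPolynomial (Fin 3) R), X 1}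
local notation "𝔮" => Ideal.span {(X 0 : MvPolynomial (Fin 3) R), X 2}
local notation "𝔍" =>
  Ideal.span {(X 0 : MvPolynomial (Fin 3) R) ^ 3, X 0 ^ 2 * X 2, X 0 * X 2 ^ 2, X 1 * X 2 ^ 3}

theorem X_pow_mul_X_pow_mul_X_pow_mem_pow {s a b c : ℕ} (hab : s ≤ a + b) (hac : 3 * s ≤ a + c) :
    (X 0 ^ a * X 1 ^ b * X 2 ^ c : MvPolynomial (Fin 3) R) ∈ 𝔍 ^ s := by
  induction s generalizing a b c with
  | zero => simp
  | succ s ih =>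
    rw [pow_succ']
    rcases Nat.eq_zero_or_pos a with rfl | ha
    · obtain ⟨b, rfl⟩ := Nat.exists_eq_add_of_le' (by omega : 1 ≤ b)
      obtain ⟨c, rfl⟩ := Nat.exists_eq_add_of_le' (by omega : 3 ≤ c)
      rw [show (X 0 ^ 0 * X 1 ^ (b + 1) * X 2 ^ (c + 3) : MvPolynomial (Fin 3) R) =
        X 1 * X 2 ^ 3 * (X 0 ^ 0 * X 1 ^ b * X 2 ^ c) by ring]
      exact Ideal.mul_mem_mul (Ideal.subset_span (by simp)) (ih (by omega) (by omega))
    · obtain ⟨t, ht1, ht3, hta, htb, htc⟩ :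
          ∃ t, 1 ≤ t ∧ t ≤ 3 ∧ t ≤ a ∧ s + t ≤ a + b ∧ 3 ≤ t + c :=
        ⟨min 3 (min a (a + b - s)), by omega⟩
      obtain ⟨a, rfl⟩ := Nat.exists_eq_add_of_le hta
      obtain ⟨c, rfl⟩ := Nat.exists_eq_add_of_le (by omega : 3 - t ≤ c)
      rw [show (X 0 ^ (t + a) * X 1 ^ b * X 2 ^ (3 - t + c) : MvPolynomial (Fin 3) R) =
        X 0 ^ t * X 2 ^ (3 - t) * (X 0 ^ a * X 1 ^ b * X 2 ^ c) by ring]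
      refine Ideal.mul_mem_mul (Ideal.subset_span ?_) (ih (by omega) (by omega))
      interval_cases t <;> simp

theorem span_pow_eq_inf (s : ℕ) : 𝔍 ^ s = 𝔭 ^ s ⊓ 𝔮 ^ (3 * s) := by
  have hJP : 𝔍 ≤ 𝔭 := by
    have hx : (X 0 : MvPolynomial (Fin 3) R) ∈ 𝔭 := Ideal.subset_span (by simp)
    have hy : (X 1 : MvPolynomial (Fin 3) R) ∈ 𝔭 := Ideal.subset_span (by simp)
    simp only [Ideal.span_le, Set.insert_subset_iff, Set.singleton_subset_iff, SetLike.mem_coe]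
    exact ⟨Ideal.pow_mem_of_mem _ hx 3 (by norm_num),
      Ideal.mul_mem_right _ _ (Ideal.pow_mem_of_mem _ hx 2 (by norm_num)),
      Ideal.mul_mem_right _ _ hx, Ideal.mul_mem_right _ _ hy⟩
  have hJQ : 𝔍 ≤ 𝔮 ^ 3 := by
    have hx : (X 0 : MvPolynomial (Fin 3) R) ∈ 𝔮 := Ideal.subset_span (by simp)
    have hz : (X 2 : MvPolynomial (Fin 3) R) ∈ 𝔮 := Ideal.subset_span (by simp)
    simp only [Ideal.span_le, Set.insert_subset_iff, Set.singleton_subset_iff, SetLike.mem_coe]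
    exact ⟨Ideal.pow_mem_pow hx 3, pow_succ 𝔮 2 ▸ Ideal.mul_mem_mul (Ideal.pow_mem_pow hx 2) hz,
      pow_succ' 𝔮 2 ▸ Ideal.mul_mem_mul hx (Ideal.pow_mem_pow hz 2),
      Ideal.mul_mem_left _ _ (Ideal.pow_mem_pow hz 3)⟩
  refine le_antisymm (le_inf (Ideal.pow_right_mono hJP s) ?_) ?_
  · rw [pow_mul]
    exact Ideal.pow_right_mono hJQ s
  rintro f ⟨hfP, hfQ⟩
  rw [f.as_sum]
  refine Ideal.sum_mem _ fun d hd => ?_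
  have h01 : s ≤ d 0 + d 1 := by
    simpa [Finsupp.weight_apply, Finsupp.sum_fintype, Fin.sum_univ_three, Set.indicator] using
      le_weight_of_mem_span_X_image_pow (S := {0, 1}) (by rwa [Set.image_pair]) hd
  have h02 : 3 * s ≤ d 0 + d 2 := by
    simpa [Finsupp.weight_apply, Finsupp.sum_fintype, Fin.sum_univ_three, Set.indicator] using
      le_weight_of_mem_span_X_image_pow (S := {0, 2}) (by rwa [Set.image_pair]) hd
  rw [monomial_eq, Finsupp.prod_fintype _ _ (by simp), Fin.prod_univ_three]
  exact Ideal.mul_mem_left _ _ (X_pow_mul_X_pow_mul_X_pow_mem_pow h01 h02)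

variable [IsDomain R] [IsNoetherianRing R]

theorem associatedPrimes_quotient_pow {s : ℕ} (hs : s ≠ 0) :
    associatedPrimes (MvPolynomial (Fin 3) R) (MvPolynomial (Fin 3) R ⧸ 𝔍 ^ s) = {𝔭, 𝔮} := by
  have h3s : 3 * s ≠ 0 := by omega
  have hP : 𝔭 = Ideal.span (X '' {0, 1}) := by rw [Set.image_pair]
  have hQ : 𝔮 = Ideal.span (X '' {0, 2}) := by rw [Set.image_pair]
  rw [span_pow_eq_inf, hP, hQ, Ideal.associatedPrimes_quotient_inf_of_isPrimary (isPrimary_span_X_image_pow hs)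
      (isPrimary_span_X_image_pow h3s), radical_span_X_image_pow hs, radical_span_X_image_pow h3s]
  · exact fun h => X_pow_notMem_span_X_image_pow (i := 1) (by simp) s h3s
      (h (Ideal.pow_mem_pow (Ideal.subset_span (Set.mem_image_of_mem X (by simp))) s))
  · exact fun h => X_pow_notMem_span_X_image_pow (i := 2) (by simp) (3 * s) hs
      (h (Ideal.pow_mem_pow (Ideal.subset_span (Set.mem_image_of_mem X (by simp))) (3 * s)))

end NormallyTorsionFreeExample

/-- `x = X 0`, `y = X 1`, `z = X 2` in `R = K[x,y,z]`. -/
theorem stmt_17 {K : Type*} [Field K] :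
    (∀ s : ℕ, 1 ≤ s →
      associatedPrimes (MvPolynomial (Fin 3) K)
          ((MvPolynomial (Fin 3) K) ⧸
            (Ideal.span {(X 0 : MvPolynomial (Fin 3) K) ^ 3, X 0 ^ 2 * X 2,
              X 0 * X 2 ^ 2, X 1 * X 2 ^ 3}) ^ s) =
        {Ideal.span {(X 0 : MvPolynomial (Fin 3) K), X 1},
          Ideal.span {(X 0 : MvPolynomial (Fin 3) K), X 2}}) ∧
    IsNTF (Ideal.span {(X 0 : MvPolynomial (Fin 3) K) ^ 3, X 0 ^ 2 * X 2,
      X 0 * X 2 ^ 2, X 1 * X 2 ^ 3}) := by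
  have hAss := @NormallyTorsionFreeExample.associatedPrimes_quotient_pow K _ _ _
  have hJ := hAss one_ne_zero
  rw [pow_one] at hJ
  refine ⟨fun s hs => hAss (by omega), fun k hk => ?_⟩
  rw [hAss (by omega), hJ]
end

section
/- Let K be a field, R = K[x_1,…,x_6], and let I = (x_1x_3x_5, x_1x_3x_4, x_1x_2x_4, x_2x_4x_5x_6, x_2x_3x_5x_6) ⊆ R. Then for every integer t ≥ 2, the monomial x_1^{t−1} x_2 x_3^{t−1} x_4 x_5^{t−1} x_6 does not belong to I^t. -/
open MvPolynomial

/-!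
Give the variables the weights `w = (1, 2, 2, 2, 2, 0)`. Every generator of `I` has weight at
least `5`, so every monomial of `I ^ t` has weight at least `5 t`, while
`x₁^(t-1) x₂ x₃^(t-1) x₄ x₅^(t-1) x₆` has weight `5 t - 1`. Concretely, the substitution
`xᵢ ↦ T ^ wᵢ` into `K[T]` maps `I` into `(T ^ 5)`, hence `I ^ t` into `(T ^ (5 t))`, and the
monomial to `T ^ (5 t - 1)`.
-/

theorem Ideal.notMem_pow_of_map_le {R S F : Type*} [CommSemiring R] [CommSemiring S]
    [FunLike F R S] [RingHomClass F R S] (f : F) {I : Ideal R} {J : Ideal S}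
    (hIJ : I.map f ≤ J) (t : ℕ) {x : R} (hx : f x ∉ J ^ t) : x ∉ I ^ t := fun hmem =>
  hx <| Ideal.pow_right_mono hIJ t <| Ideal.map_pow f I t ▸ Ideal.mem_map_of_mem f hmem

theorem Polynomial.X_pow_notMem_span_X_pow_pow {R : Type*} [CommSemiring R] [Nontrivial R]
    {n m t : ℕ} (h : n < m * t) : (X ^ n : Polynomial R) ∉ Ideal.span {X ^ m} ^ t := by
  rw [Ideal.span_singleton_pow, Ideal.mem_span_singleton, ← pow_mul, X_pow_dvd_iff]
  exact fun hdvd => by simpa using hdvd n h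

noncomputable def MvPolynomial.weightSubst {σ R : Type*} [CommSemiring R] (w : σ → ℕ) :
    MvPolynomial σ R →ₐ[R] Polynomial R :=
  aeval fun i => Polynomial.X ^ w i

@[simp]
theorem MvPolynomial.weightSubst_X {σ R : Type*} [CommSemiring R] (w : σ → ℕ) (i : σ) :
    weightSubst w (X i : MvPolynomial σ R) = Polynomial.X ^ w i :=
  aeval_X _ i

/-- `x_i = X (i-1)` in `R = K[x_1,…,x_6]`. -/
theorem stmt_18 {K : Type*} [Field K] (t : ℕ) (ht : 2 ≤ t) :
    (X 0 : MvPolynomial (Fin 6) K) ^ (t - 1) * X 1 * X 2 ^ (t - 1) * X 3 * X 4 ^ (t - 1) * X 5 ∉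
      (Ideal.span {(X 0 : MvPolynomial (Fin 6) K) * X 2 * X 4, X 0 * X 2 * X 3,
        X 0 * X 1 * X 3, X 1 * X 3 * X 4 * X 5, X 1 * X 2 * X 4 * X 5}) ^ t := by
  let φ : MvPolynomial (Fin 6) K →ₐ[K] Polynomial K := weightSubst ![1, 2, 2, 2, 2, 0]
  have hI : Ideal.map φ (Ideal.span {(X 0 : MvPolynomial (Fin 6) K) * X 2 * X 4,
      X 0 * X 2 * X 3, X 0 * X 1 * X 3, X 1 * X 3 * X 4 * X 5, X 1 * X 2 * X 4 * X 5})
      ≤ Ideal.span {Polynomial.X ^ 5} := by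
    rw [Ideal.map_span, Ideal.span_le]
    rintro _ ⟨q, hq, rfl⟩
    rw [SetLike.mem_coe, Ideal.mem_span_singleton]
    rcases hq with rfl | rfl | rfl | rfl | rfl <;>
      · simp only [φ, map_mul, weightSubst_X, Matrix.cons_val_zero, Matrix.cons_val_one,
          Matrix.cons_val, pow_zero, pow_one, mul_one]
        ring_nf
        exact pow_dvd_pow _ (by norm_num)
  refine Ideal.notMem_pow_of_map_le φ hI t ?_
  have hweight : φ ((X 0 : MvPolynomial (Fin 6) K) ^ (t - 1) * X 1 * X 2 ^ (t - 1) * X 3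
      * X 4 ^ (t - 1) * X 5) = Polynomial.X ^ (5 * (t - 1) + 4) := by
    simp only [φ, map_mul, map_pow, weightSubst_X, Matrix.cons_val_zero, Matrix.cons_val_one,
        Matrix.cons_val, pow_zero, pow_one, mul_one]
    ring
  rw [hweight]
  exact Polynomial.X_pow_notMem_span_X_pow_pow (n := 5 * (t - 1) + 4) (m := 5) (by omega)
end
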